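/- In F the identity x₇ = a·c'·d + d' − a·e − c'·f holds; that is, the frozen variable x₇ is the stated polynomial in the nine generators a, a', b, c, c', d, d', e, f. -/

import Mathlib

noncomputable section

/-- The field `F = Frac(ℤ[x₀,…,x₈])`. -/
abbrev F : Type := FractionRing (MvPolynomial (Fin 9) ℤ)

/-- The images of the indeterminates `x₀,…,x₈` in `F`. -/
def x (i : Fin 9) : F := algebraMap (MvPolynomial (Fin 9) ℤ) F (MvPolynomial.X i)

def a : F := x 0
def a' : F := x 4
def b : F := x 5
def c : F := (x 1 + x 0 * x 2 + x 7) / (x 0 * x 1)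
def c' : F := (x 3 + x 2 * x 4 + x 8) / (x 3 * x 4)
def f : F := (x 2 + x 1 * x 3 * x 5 + x 6) / (x 2 * x 5)
def d : F :=
  ((x 1) ^ 2 * x 3 * x 5 + (x 2 + x 6) * (x 0 * x 2 + x 7)
      + x 1 * (x 2 + x 6 + x 3 * x 5 * x 7)) / (x 0 * x 1 * x 2 * x 5)
def d' : F :=
  ((x 2) ^ 2 * x 4 + (x 1 * x 3 * x 5 + x 6) * (x 3 + x 8)
      + x 2 * (x 3 + x 4 * x 6 + x 8)) / (x 2 * x 3 * x 4 * x 5)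
def e : F :=
  ((x 1) ^ 2 * x 3 * x 5 * (x 3 + x 8)
      + (x 2 + x 6) * (x 0 * x 2 + x 7) * (x 3 + x 2 * x 4 + x 8)
      + x 1 * ((x 2) ^ 2 * x 4 + (x 6 + x 3 * x 5 * x 7) * (x 3 + x 8)
          + x 2 * (x 3 + x 4 * x 6 + x 8))) / (x 0 * x 1 * x 2 * x 3 * x 4 * x 5)

theorem x_ne_zero (i : Fin 9) : x i ≠ 0 :=
  (map_ne_zero_iff _ (IsFractionRing.injective _ F)).mpr (MvPolynomial.X_ne_zero i)

theorem stmt2 : x 7 = a * c' * d + d' - a * e - c' * f := by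
  have := x_ne_zero 0; have := x_ne_zero 1; have := x_ne_zero 2
  have := x_ne_zero 3; have := x_ne_zero 4; have := x_ne_zero 5
  simp only [a, c', d, d', e, f]
  field_simp
  ring
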